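/- The set of p-weak ε-upper gradients of u that lie in L^p(X,m) is exactly the L^p-closure of the set of (true) ε-upper gradients of u intersected with L^p. -/

import Mathlib

open scoped ENNReal

variable {X : Type*} [MetricSpace X]

/-- `q 0, …, q N` is an `ε`-chain: consecutive points at distance at most `ε`. -/
def IsEpsChain (ε : ℝ) (N : ℕ) (q : ℕ → X) : Prop :=
  ∀ i < N, dist (q i) (q (i + 1)) ≤ ε

/-- The chain integral `∫_c g = Σ (g(q_i)+g(q_{i+1}))/2 · d(q_i,q_{i+1})`. -/
noncomputable def chainInt (g : X → ℝ≥0∞) (N : ℕ) (q : ℕ → X) : ℝ≥0∞ :=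
  ∑ i ∈ Finset.range N,
    (g (q i) + g (q (i + 1))) / 2 * ENNReal.ofReal (dist (q i) (q (i + 1)))

open MeasureTheory

/-- A chain is encoded as a pair `(N, q)`, representing the points `q 0, …, q N`. -/
abbrev Chain (X : Type*) := ℕ × (ℕ → X)

/-- The `(ε,p)`-modulus of a family of chains `C`:
`inf { ∫ ρ^p dm : ρ Borel nonnegative, ∫_c ρ ≥ 1 for every ε-chain c ∈ C }`. -/
noncomputable def chainMod [MeasurableSpace X] (m : Measure X) (p ε : ℝ)
    (C : Set (Chain X)) : ℝ≥0∞ :=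
  ⨅ (ρ : X → ℝ≥0∞) (_ : Measurable ρ ∧
      ∀ c ∈ C, IsEpsChain ε c.1 c.2 → 1 ≤ chainInt ρ c.1 c.2),
    ∫⁻ x, ρ x ^ p ∂m

/-- Symmetric difference in `ℝ≥0∞`, playing the role of `|a - b|`. -/
noncomputable def ediff (a b : ℝ≥0∞) : ℝ≥0∞ := (a - b) + (b - a)

/-- `g` is a `p`-weak `ε`-upper gradient of `u`: the upper gradient inequality holds
along all chains outside a family of `(ε,p)`-chain modulus zero. -/
def IsWeakEpsUpperGradient [MeasurableSpace X] (m : Measure X) (p ε : ℝ)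
    (u : X → ℝ) (g : X → ℝ≥0∞) : Prop :=
  Measurable g ∧
  chainMod m p ε {c : Chain X |
    ¬ (ENNReal.ofReal |u (c.2 c.1) - u (c.2 0)| ≤ chainInt g c.1 c.2)} = 0

/-- `g` is a (true) `ε`-upper gradient of `u`. -/
def IsEpsUpperGradient (ε : ℝ) (u : X → ℝ) (g : X → ℝ≥0∞) : Prop :=
  ∀ (N : ℕ) (q : ℕ → X), IsEpsChain ε N q →
    ENNReal.ofReal |u (q N) - u (q 0)| ≤ chainInt g N q

lemma chainInt_mono {f g : X → ℝ≥0∞} (h : ∀ x, f x ≤ g x) (N : ℕ) (q : ℕ → X) :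
    chainInt f N q ≤ chainInt g N q := by
  refine Finset.sum_le_sum fun i _ => ?_
  gcongr <;> exact h _

lemma chainInt_add (f g : X → ℝ≥0∞) (N : ℕ) (q : ℕ → X) :
    chainInt (fun x => f x + g x) N q = chainInt f N q + chainInt g N q := by
  rw [chainInt, chainInt, chainInt, ← Finset.sum_add_distrib]
  refine Finset.sum_congr rfl fun i _ => ?_
  rw [← add_mul, ← ENNReal.add_div]
  ring_nf

lemma chainInt_smul (a : ℝ≥0∞) (f : X → ℝ≥0∞) (N : ℕ) (q : ℕ → X) :
    chainInt (fun x => a * f x) N q = a * chainInt f N q := by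
  rw [chainInt, chainInt, Finset.mul_sum]
  refine Finset.sum_congr rfl fun i _ => ?_
  rw [← mul_add, mul_div_assoc, mul_assoc]

lemma chainInt_sum (f : ℕ → X → ℝ≥0∞) (n N : ℕ) (q : ℕ → X) :
    chainInt (fun x => ∑ k ∈ Finset.range n, f k x) N q
      = ∑ k ∈ Finset.range n, chainInt (f k) N q := by
  induction n with
  | zero => simp [chainInt]
  | succ n ih =>
      simp only [Finset.sum_range_succ]
      rw [← ih, ← chainInt_add]

lemma lintegral_tsum_rpow_le {X : Type*} [MeasurableSpace X] {m : Measure X} {p : ℝ}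
    (hp : 1 ≤ p) {f : ℕ → X → ℝ≥0∞} (hf : ∀ k, Measurable (f k))
    (hb : ∀ k, (∫⁻ x, f k x ^ p ∂m) ^ (1/p) ≤ (2 : ℝ≥0∞)⁻¹ ^ k) :
    ∫⁻ x, (∑' k, f k x) ^ p ∂m ≤ 2 ^ p := by
  have hp0 : 0 < p := lt_of_lt_of_le one_pos hp
  set s : ℕ → X → ℝ≥0∞ := fun n x => ∑ k ∈ Finset.range n, f k x with hs
  have hsmeas : ∀ n, Measurable (s n) := fun n => Finset.measurable_sum _ (fun k _ => hf k)
  have key : ∀ n, (∫⁻ x, s n x ^ p ∂m) ^ (1/p) ≤ ∑ k ∈ Finset.range n, (2:ℝ≥0∞)⁻¹ ^ k := by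
    intro n
    induction n with
    | zero =>
        simp [s, ENNReal.zero_rpow_of_pos hp0,
          ENNReal.zero_rpow_of_pos (by positivity : (0:ℝ) < 1/p), hp0]
    | succ n ih =>
        have h2 := ENNReal.lintegral_Lp_add_le (μ := m) (hsmeas n).aemeasurable
          (hf n).aemeasurable hp
        have heq : (∫⁻ x, s (n+1) x ^ p ∂m) = ∫⁻ x, (s n + f n) x ^ p ∂m :=
          lintegral_congr fun x => by
            simp only [Pi.add_apply, s, Finset.sum_range_succ]
        rw [heq, Finset.sum_range_succ]
        exact h2.trans (add_le_add ih (hb n))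
  have key2 : ∀ n, ∫⁻ x, s n x ^ p ∂m ≤ 2 ^ p := by
    intro n
    have hle : (∫⁻ x, s n x ^ p ∂m) ^ (1/p) ≤ 2 := by
      refine (key n).trans ?_
      calc ∑ k ∈ Finset.range n, (2:ℝ≥0∞)⁻¹ ^ k ≤ ∑' k : ℕ, (2:ℝ≥0∞)⁻¹ ^ k :=
            ENNReal.sum_le_tsum _
        _ = 2 := by rw [ENNReal.tsum_geometric, ENNReal.one_sub_inv_two, inv_inv]
    have := ENNReal.rpow_le_rpow hle hp0.le
    rwa [← ENNReal.rpow_mul, one_div, inv_mul_cancel₀ hp0.ne', ENNReal.rpow_one] at this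
  have hmono : Monotone s := fun a b hab x =>
    Finset.sum_le_sum_of_subset (Finset.range_subset_range.2 hab)
  have hpt : ∀ x, (∑' k, f k x) ^ p = ⨆ n, s n x ^ p := by
    intro x
    rw [ENNReal.tsum_eq_iSup_nat]
    exact Monotone.map_iSup_of_continuousAt (ENNReal.continuous_rpow_const.continuousAt)
      (fun a b h => ENNReal.rpow_le_rpow h hp0.le)
      (by simp [ENNReal.zero_rpow_of_pos hp0])
  calc ∫⁻ x, (∑' k, f k x) ^ p ∂m = ∫⁻ x, ⨆ n, s n x ^ p ∂m := lintegral_congr hpt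
    _ = ⨆ n, ∫⁻ x, s n x ^ p ∂m :=
        lintegral_iSup (fun n => (hsmeas n).pow_const p)
          (fun a b hab x => ENNReal.rpow_le_rpow (hmono hab x) hp0.le)
    _ ≤ 2 ^ p := iSup_le key2

/-- helper: from the bound `∫ f^p < ((2⁻¹)^k)^p` get the `L^p` norm bound. -/
lemma rpow_inv_le_of_lt {a b : ℝ≥0∞} {p : ℝ} (hp0 : 0 < p) (h : a ≤ b ^ p) :
    a ^ (1/p) ≤ b := by
  have := ENNReal.rpow_le_rpow h (by positivity : (0:ℝ) ≤ 1/p)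
  rwa [← ENNReal.rpow_mul, mul_one_div, div_self hp0.ne', ENNReal.rpow_one] at this

/-- The `p`-integrable `p`-weak `ε`-upper gradients of `u` are exactly the
`L^p`-limits of `p`-integrable (true) `ε`-upper gradients of `u`. -/
theorem weakEpsUpperGradient_iff_closure [MeasurableSpace X] [BorelSpace X]
    (m : Measure X) (p ε : ℝ) (hp : 1 ≤ p) (hε : 0 < ε)
    (u : X → ℝ) (g : X → ℝ≥0∞) (hg : Measurable g) (hLp : ∫⁻ x, g x ^ p ∂m < ∞) :
    IsWeakEpsUpperGradient m p ε u g ↔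
      ∃ gj : ℕ → X → ℝ≥0∞,
        (∀ j, Measurable (gj j) ∧ IsEpsUpperGradient ε u (gj j) ∧
          ∫⁻ x, gj j x ^ p ∂m < ∞) ∧
        Filter.Tendsto (fun j => ∫⁻ x, ediff (gj j x) (g x) ^ p ∂m)
          Filter.atTop (nhds 0) := by
  have hp0 : 0 < p := lt_of_lt_of_le one_pos hp
  set C : Set (Chain X) := {c : Chain X |
    ¬ (ENNReal.ofReal |u (c.2 c.1) - u (c.2 0)| ≤ chainInt g c.1 c.2)} with hC
  constructor
  · rintro ⟨-, hmod⟩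
    -- extract admissible functions with small norms
    have hex : ∀ k : ℕ, ∃ ρ : X → ℝ≥0∞, (Measurable ρ ∧
        ∀ c ∈ C, IsEpsChain ε c.1 c.2 → 1 ≤ chainInt ρ c.1 c.2) ∧
        ∫⁻ x, ρ x ^ p ∂m ≤ ((2:ℝ≥0∞)⁻¹ ^ k) ^ p := by
      intro k
      have hpos : 0 < ((2:ℝ≥0∞)⁻¹ ^ k) ^ p :=
        ENNReal.rpow_pos (ENNReal.pow_pos (by simp) k) (by simp)
      have hlt : chainMod m p ε C < ((2:ℝ≥0∞)⁻¹ ^ k) ^ p := hmod ▸ hpos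
      rw [chainMod] at hlt
      simp only [iInf_lt_iff] at hlt
      obtain ⟨ρ, hρ1, hρ2⟩ := hlt
      exact ⟨ρ, hρ1, hρ2.le⟩
    choose ρ hρadm hρint using hex
    set σ : X → ℝ≥0∞ := fun x => ∑' k, ρ k x with hσ
    have hσmeas : Measurable σ := Measurable.ennreal_tsum fun k => (hρadm k).1
    have hσint : ∫⁻ x, σ x ^ p ∂m ≤ 2 ^ p :=
      lintegral_tsum_rpow_le hp (fun k => (hρadm k).1)
        (fun k => rpow_inv_le_of_lt hp0 (hρint k))
    have hσfin : ∫⁻ x, σ x ^ p ∂m < ∞ :=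
      hσint.trans_lt (ENNReal.rpow_lt_top_of_nonneg hp0.le (by simp))
    have hσtop : ∀ c ∈ C, IsEpsChain ε c.1 c.2 → chainInt σ c.1 c.2 = ⊤ := by
      intro c hc hch
      refine top_unique ?_
      rw [← ENNReal.tsum_const_eq_top_of_ne_zero (α := ℕ) (one_ne_zero (α := ℝ≥0∞)),
        ENNReal.tsum_eq_iSup_nat]
      refine iSup_le fun n => ?_
      calc ∑ _k ∈ Finset.range n, (1:ℝ≥0∞)
          ≤ ∑ k ∈ Finset.range n, chainInt (ρ k) c.1 c.2 :=
            Finset.sum_le_sum fun k _ => (hρadm k).2 c hc hch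
        _ = chainInt (fun x => ∑ k ∈ Finset.range n, ρ k x) c.1 c.2 :=
            (chainInt_sum _ n _ _).symm
        _ ≤ chainInt σ c.1 c.2 :=
            chainInt_mono (fun x => ENNReal.sum_le_tsum _) _ _
    set a : ℕ → ℝ≥0∞ := fun j => ((j+1 : ℕ) : ℝ≥0∞)⁻¹ with ha
    have ha0 : ∀ j, a j ≠ 0 := fun j => by
      simp [a, ENNReal.inv_ne_zero, ENNReal.natCast_ne_top]
    have ha1 : ∀ j, a j ≤ 1 := fun j =>
      ENNReal.inv_le_one.2 (by exact_mod_cast Nat.one_le_iff_ne_zero.2 (Nat.succ_ne_zero j))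
    refine ⟨fun j x => g x + a j * σ x, fun j => ⟨hg.add (hσmeas.const_mul _), ?_, ?_⟩, ?_⟩
    · -- true upper gradient
      intro N q hq
      by_cases hgood : ENNReal.ofReal |u (q N) - u (q 0)| ≤ chainInt g N q
      · exact hgood.trans (chainInt_mono (fun x => le_self_add) N q)
      · have hmem : ((N, q) : Chain X) ∈ C := hgood
        have : chainInt (fun x => g x + a j * σ x) N q = ⊤ := by
          rw [chainInt_add, chainInt_smul, hσtop (N, q) hmem hq,
            ENNReal.mul_top (ha0 j), add_top]
        rw [this]; exact le_top
    · -- p-integrability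
      have hle : ∀ x, (g x + a j * σ x) ^ p ≤ ((g + σ) x) ^ p := by
        intro x
        refine ENNReal.rpow_le_rpow ?_ hp0.le
        calc g x + a j * σ x ≤ g x + 1 * σ x :=
              add_le_add_right (mul_le_mul_left (ha1 j) _) _
          _ = (g + σ) x := by rw [one_mul]; rfl
      calc ∫⁻ x, (g x + a j * σ x) ^ p ∂m ≤ ∫⁻ x, ((g + σ) x) ^ p ∂m :=
            lintegral_mono hle
        _ < ∞ := ENNReal.lintegral_rpow_add_lt_top_of_lintegral_rpow_lt_top
            hg.aemeasurable hLp hσfin hp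
    · -- convergence
      have hbnd : ∀ j, ∫⁻ x, ediff (g x + a j * σ x) (g x) ^ p ∂m
          ≤ a j ^ p * ∫⁻ x, σ x ^ p ∂m := by
        intro j
        have hdiff : ∀ x, ediff (g x + a j * σ x) (g x) ≤ a j * σ x := by
          intro x
          rw [ediff, tsub_eq_zero_of_le le_self_add, add_zero]
          exact tsub_le_iff_right.2 (le_of_eq (add_comm _ _))
        calc ∫⁻ x, ediff (g x + a j * σ x) (g x) ^ p ∂m
            ≤ ∫⁻ x, a j ^ p * σ x ^ p ∂m := by
              refine lintegral_mono fun x => ?_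
              rw [← ENNReal.mul_rpow_of_nonneg _ _ hp0.le]
              exact ENNReal.rpow_le_rpow (hdiff x) hp0.le
          _ = a j ^ p * ∫⁻ x, σ x ^ p ∂m :=
              lintegral_const_mul _ (hσmeas.pow_const p)
      have hlim : Filter.Tendsto (fun j => a j ^ p * ∫⁻ x, σ x ^ p ∂m)
          Filter.atTop (nhds 0) := by
        have h1 : Filter.Tendsto a Filter.atTop (nhds 0) :=
          ENNReal.tendsto_inv_nat_nhds_zero.comp (Filter.tendsto_add_atTop_nat 1)
        have h2 : Filter.Tendsto (fun j => a j ^ p) Filter.atTop (nhds 0) := by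
          have := (ENNReal.continuous_rpow_const (y := p)).continuousAt (x := (0:ℝ≥0∞))
          have h3 := this.tendsto.comp h1
          rwa [ENNReal.zero_rpow_of_pos hp0] at h3
        have := ENNReal.Tendsto.mul_const h2 (Or.inr hσfin.ne)
        rwa [zero_mul] at this
      exact tendsto_of_tendsto_of_tendsto_of_le_of_le tendsto_const_nhds hlim
        (fun j => zero_le) hbnd
  · rintro ⟨gj, hgj, htend⟩
    refine ⟨hg, ?_⟩
    set h : ℕ → X → ℝ≥0∞ := fun j x => ediff (gj j x) (g x) with hh
    have hhm : ∀ j, Measurable (h j) := fun j =>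
      (((hgj j).1.sub hg).add (hg.sub (hgj j).1))
    have hex : ∀ k : ℕ, ∃ j : ℕ, ∫⁻ x, h j x ^ p ∂m ≤ ((2:ℝ≥0∞)⁻¹ ^ k) ^ p := by
      intro k
      have hpos : 0 < ((2:ℝ≥0∞)⁻¹ ^ k) ^ p :=
        ENNReal.rpow_pos (ENNReal.pow_pos (by simp) k) (by simp)
      obtain ⟨N, hN⟩ := ENNReal.tendsto_atTop_zero.mp htend _ hpos
      exact ⟨N, hN N le_rfl⟩
    choose φ hφ using hex
    set σ : X → ℝ≥0∞ := fun x => ∑' k, h (φ k) x with hσ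
    have hσmeas : Measurable σ := Measurable.ennreal_tsum fun k => hhm (φ k)
    have hσint : ∫⁻ x, σ x ^ p ∂m ≤ 2 ^ p :=
      lintegral_tsum_rpow_le hp (fun k => hhm (φ k))
        (fun k => rpow_inv_le_of_lt hp0 (hφ k))
    have hσfin : ∫⁻ x, σ x ^ p ∂m < ∞ :=
      hσint.trans_lt (ENNReal.rpow_lt_top_of_nonneg hp0.le (by simp))
    have hσtop : ∀ c ∈ C, IsEpsChain ε c.1 c.2 → chainInt σ c.1 c.2 = ⊤ := by
      intro c hc hch
      set A := ENNReal.ofReal |u (c.2 c.1) - u (c.2 0)| with hA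
      set B := chainInt g c.1 c.2 with hB
      have hBA : B < A := not_le.mp hc
      have hδ : (0:ℝ≥0∞) < A - B := tsub_pos_of_lt hBA
      have hkey : ∀ j, A - B ≤ chainInt (h j) c.1 c.2 := by
        intro j
        have h1 : A ≤ chainInt (gj j) c.1 c.2 := (hgj j).2.1 c.1 c.2 hch
        have h2 : chainInt (gj j) c.1 c.2 ≤ chainInt (fun x => h j x + g x) c.1 c.2 := by
          refine chainInt_mono (fun x => ?_) _ _
          calc gj j x ≤ gj j x - g x + g x := le_tsub_add
            _ ≤ h j x + g x := add_le_add_left le_self_add _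
        rw [chainInt_add] at h2
        exact tsub_le_iff_right.mpr (h1.trans h2)
      refine top_unique ?_
      rw [← ENNReal.tsum_const_eq_top_of_ne_zero (α := ℕ) hδ.ne', ENNReal.tsum_eq_iSup_nat]
      refine iSup_le fun n => ?_
      calc ∑ _k ∈ Finset.range n, (A - B)
          ≤ ∑ k ∈ Finset.range n, chainInt (h (φ k)) c.1 c.2 :=
            Finset.sum_le_sum fun k _ => hkey (φ k)
        _ = chainInt (fun x => ∑ k ∈ Finset.range n, h (φ k) x) c.1 c.2 :=
            (chainInt_sum _ n _ _).symm
        _ ≤ chainInt σ c.1 c.2 := chainInt_mono (fun x => ENNReal.sum_le_tsum _) _ _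
    set I := ∫⁻ x, σ x ^ p ∂m with hI
    have hbound : ∀ η : ℝ≥0∞, 0 < η → η ≠ ⊤ → chainMod m p ε C ≤ η := by
      intro η hη hηt
      set t := (η / (I + 1)) ^ (1/p) with ht
      have htne : η / (I + 1) ≠ ⊤ :=
        (ENNReal.div_lt_top hηt (by simp)).ne
      have ht0 : t ≠ 0 :=
        (ENNReal.rpow_pos (ENNReal.div_pos hη.ne' (by simp [hσfin.ne])) htne).ne'
      have htp : t ^ p = η / (I + 1) := by
        rw [ht, ← ENNReal.rpow_mul, one_div, inv_mul_cancel₀ hp0.ne', ENNReal.rpow_one]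
      have hadm : Measurable (fun x => t * σ x) ∧
          ∀ c ∈ C, IsEpsChain ε c.1 c.2 → 1 ≤ chainInt (fun x => t * σ x) c.1 c.2 := by
        refine ⟨hσmeas.const_mul t, fun c hc hch => ?_⟩
        rw [chainInt_smul, hσtop c hc hch, ENNReal.mul_top ht0]
        exact le_top
      calc chainMod m p ε C ≤ ∫⁻ x, (t * σ x) ^ p ∂m :=
            iInf_le_of_le (fun x => t * σ x) (iInf_le _ hadm)
        _ = t ^ p * I := by
            simp_rw [ENNReal.mul_rpow_of_nonneg _ _ hp0.le]
            rw [lintegral_const_mul _ (hσmeas.pow_const p), hI]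
        _ = η / (I + 1) * I := by rw [htp]
        _ ≤ η / (I + 1) * (I + 1) := by gcongr; exact le_self_add
        _ = η := by
            rw [div_eq_mul_inv, mul_assoc, ENNReal.inv_mul_cancel (by simp)
              (by simp [hσfin.ne]), mul_one]
    have h1 : chainMod m p ε C ≤ 1 := hbound 1 one_pos ENNReal.one_ne_top
    by_contra hne
    have hlt : chainMod m p ε C / 2 < chainMod m p ε C :=
      ENNReal.half_lt_self hne (h1.trans_lt ENNReal.one_lt_top).ne
    exact absurd (hbound _ (ENNReal.half_pos hne) (by
      exact (ENNReal.div_lt_top (h1.trans_lt ENNReal.one_lt_top).ne (by norm_num)).ne)) (not_le.mpr hlt)
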